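/- Let Q be a dynamically generated basic sequence. For every ℓ ∈ ℕ and every digit block D ∈ ℕ₀^ℓ, we have Σ_{B ∈ ℕ_{≥2}^ℓ} P_{D,B} = P_D, where P_{D,B} = lim_{n→∞} Q_n(D,B)/n and P_D = lim_{n→∞} Q_n(D)/n. -/

import Mathlib

/-!
Sorting the positions `j` by the block `B` of bases they carry splits the average defining `P_D`
into the averages defining the `P_{D,B}`. Passing to the limit is legitimate because the weights
are uniformly small off a finite set of blocks: a block admissible for `D` has all bases `≥ 1`, so
if one of them is `≥ M` the weight `1/(b₁⋯b_ℓ)` is at most `1/M`.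
-/

open Filter MeasureTheory Topology Finset

section Frequencies

variable {α : Type*} (β : ℕ → α) (g : α → ℝ)

lemma sum_average_indicator_eq [DecidableEq α] (s : Finset α) (n : ℕ) :
    ∑ a ∈ s, (∑ j ∈ Icc 1 n, if β j = a then g a else 0) / (n : ℝ) =
      (∑ j ∈ Icc 1 n, if β j ∈ s then g (β j) else 0) / (n : ℝ) := by
  rw [← sum_div, sum_comm]
  simp only [sum_ite_eq]

theorem hasSum_of_tendsto_average [DecidableEq α] (hg : ∀ a, 0 ≤ g a)
    (htight : ∀ ε > 0, ∃ K : Finset α, ∀ a ∉ K, g a ≤ ε) {P : α → ℝ} {P' : ℝ}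
    (hP : ∀ a, Tendsto (fun n : ℕ => (∑ j ∈ Icc 1 n, if β j = a then g a else 0) / (n : ℝ))
      atTop (𝓝 (P a)))
    (hP' : Tendsto (fun n : ℕ => (∑ j ∈ Icc 1 n, g (β j)) / (n : ℝ)) atTop (𝓝 P')) :
    HasSum P P' := by
  have hsum (s : Finset α) : Tendsto
      (fun n : ℕ => (∑ j ∈ Icc 1 n, if β j ∈ s then g (β j) else 0) / (n : ℝ))
      atTop (𝓝 (∑ a ∈ s, P a)) := by
    simpa only [sum_average_indicator_eq] using tendsto_finsetSum s fun a _ => hP a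
  have hle (s : Finset α) : ∑ a ∈ s, P a ≤ P' := by
    refine le_of_tendsto_of_tendsto' (hsum s) hP' fun n => ?_
    gcongr with j
    split_ifs
    exacts [le_rfl, hg _]
  have hge (ε : ℝ) (hε : 0 ≤ ε) (K s : Finset α) (hK : ∀ a ∉ K, g a ≤ ε) (hKs : K ⊆ s) :
      P' ≤ ∑ a ∈ s, P a + ε := by
    refine le_of_tendsto_of_tendsto' hP' ((hsum s).add_const ε) fun n => ?_
    rw [← sub_le_iff_le_add', ← sub_div, ← sum_sub_distrib]
    refine div_le_of_le_mul₀ n.cast_nonneg hε ?_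
    calc ∑ j ∈ Icc 1 n, (g (β j) - if β j ∈ s then g (β j) else 0)
        ≤ ∑ _j ∈ Icc 1 n, ε := by
          gcongr with j
          split_ifs with hj
          · simpa using hε
          · simpa using hK _ fun h => hj (hKs h)
      _ = ε * n := by simp [mul_comm]
  refine tendsto_order.2
    ⟨fun a ha => ?_, fun a ha => Eventually.of_forall fun s => (hle s).trans_lt ha⟩
  obtain ⟨K, hK⟩ := htight ((P' - a) / 2) (by linarith)
  filter_upwards [eventually_ge_atTop K] with s hs
  linarith [hge _ (by linarith) K s hK hs]

end Frequencies

section BlockWeight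

variable {ι : Type*} [Fintype ι]

/-- The weight `1/(b₁⋯b_ℓ)` that a block `B` of bases contributes to `Q_n(D)`. -/
noncomputable def blockWeight (D B : ι → ℕ) : ℝ :=
  if ∀ i, D i < B i then (∏ i, (B i : ℝ))⁻¹ else 0

lemma blockWeight_nonneg (D B : ι → ℕ) : 0 ≤ blockWeight D B := by
  unfold blockWeight
  split_ifs
  exacts [by positivity, le_rfl]

lemma blockWeight_le_inv_of_le {D B : ι → ℕ} {M : ℕ} (hM : 0 < M) {i : ι} (hi : M ≤ B i) :
    blockWeight D B ≤ (M : ℝ)⁻¹ := by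
  unfold blockWeight
  split_ifs with hD
  · have hpos : 0 < ∏ i, B i := prod_pos fun i _ => (Nat.zero_le _).trans_lt (hD i)
    have hle : M ≤ ∏ i, B i := hi.trans (Nat.le_of_dvd hpos (dvd_prod_of_mem B (mem_univ i)))
    exact inv_anti₀ (by positivity) (by exact_mod_cast hle)
  · positivity

lemma exists_blockWeight_le (D : ι → ℕ) {ε : ℝ} (hε : 0 < ε) :
    ∃ K : Finset (ι → ℕ), ∀ B ∉ K, blockWeight D B ≤ ε := by
  classical
  obtain ⟨M, hM⟩ := exists_nat_one_div_lt hε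
  refine ⟨Fintype.piFinset fun _ => range (M + 1), fun B hB => ?_⟩
  obtain ⟨i, hi⟩ : ∃ i, M + 1 ≤ B i := by simpa using hB
  calc blockWeight D B ≤ ((M + 1 : ℕ) : ℝ)⁻¹ := blockWeight_le_inv_of_le M.succ_pos hi
    _ ≤ ε := by simpa using hM.le

end BlockWeight

theorem stmt_7_general
    (q : ℕ → ℕ)
    (ℓ : ℕ) (D : Fin ℓ → ℕ)
    (PD : ℝ)
    (hPD : Tendsto (fun n : ℕ =>
        (∑ j ∈ Finset.Icc 1 n,
          (if ∀ i : Fin ℓ, D i < q (j + (i : ℕ)) then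
            (∏ i : Fin ℓ, (q (j + (i : ℕ)) : ℝ))⁻¹ else 0)) / (n : ℝ))
      atTop (𝓝 PD))
    (PDB : (Fin ℓ → ℕ) → ℝ)
    (hPDB : ∀ B : Fin ℓ → ℕ,
      Tendsto (fun n : ℕ =>
        (∑ j ∈ Finset.Icc 1 n,
          (if (∀ i : Fin ℓ, q (j + (i : ℕ)) = B i) ∧ (∀ i : Fin ℓ, D i < B i) then
            (∏ i : Fin ℓ, (B i : ℝ))⁻¹ else 0)) / (n : ℝ))
        atTop (𝓝 (PDB B))) :
    ∑' B : Fin ℓ → ℕ, PDB B = PD := by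
  refine (hasSum_of_tendsto_average (fun j (i : Fin ℓ) => q (j + (i : ℕ))) (blockWeight D)
    (blockWeight_nonneg D) (fun ε hε => exists_blockWeight_le D hε) (fun B => ?_) ?_).tsum_eq
  · convert hPDB B using 4 with n j
    simp only [blockWeight, funext_iff, ite_and]
    congr
  · convert hPD using 4 with n j
    simp only [blockWeight]

/-- For a dynamically generated basic sequence `Q`, every digit block `D` of length `ℓ`
satisfies `∑_{B ∈ ℕ≥2^ℓ} P_{D,B} = P_D`, where `P_{D,B} = lim Q_n(D,B)/n` and
`P_D = lim Q_n(D)/n`. -/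
theorem stmt_7 {X : Type*} [MetricSpace X] [CompleteSpace X]
    [TopologicalSpace.SeparableSpace X] [MeasurableSpace X] [BorelSpace X]
    (μ : Measure X) [IsProbabilityMeasure μ]
    (hμpos : ∀ U : Set X, IsOpen U → U.Nonempty → 0 < μ U)
    (T : X → X) (hTcont : Continuous T) (hTpres : MeasurePreserving T μ μ)
    (f : X → ℕ) (hfcont : Continuous f) (hf2 : ∀ x, 2 ≤ f x)
    (x₀ : X)
    (hgen : ∀ g : X → ℝ, Continuous g → Integrable g μ →
      Tendsto (fun N : ℕ => (1 / (N : ℝ)) * ∑ n ∈ Finset.range N, g (T^[n] x₀))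
        atTop (𝓝 (∫ x, g x ∂μ)))
    (q : ℕ → ℕ) (hq : ∀ n, q n = f (T^[n] x₀))
    (ℓ : ℕ) (hℓ : 0 < ℓ) (D : Fin ℓ → ℕ)
    (PD : ℝ)
    (hPD : Tendsto (fun n : ℕ =>
        (∑ j ∈ Finset.Icc 1 n,
          (if ∀ i : Fin ℓ, D i < q (j + (i : ℕ)) then
            (∏ i : Fin ℓ, (q (j + (i : ℕ)) : ℝ))⁻¹ else 0)) / (n : ℝ))
      atTop (𝓝 PD))
    (PDB : (Fin ℓ → ℕ) → ℝ)
    (hPDB : ∀ B : Fin ℓ → ℕ,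
      Tendsto (fun n : ℕ =>
        (∑ j ∈ Finset.Icc 1 n,
          (if (∀ i : Fin ℓ, q (j + (i : ℕ)) = B i) ∧ (∀ i : Fin ℓ, D i < B i) then
            (∏ i : Fin ℓ, (B i : ℝ))⁻¹ else 0)) / (n : ℝ))
        atTop (𝓝 (PDB B))) :
    ∑' B : Fin ℓ → ℕ, PDB B = PD :=
  stmt_7_general q ℓ D PD hPD PDB hPDB
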